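/- arXiv:2512.09578 — 12 statements merged into one kernel-verified Lean document; each statement's English description precedes it below -/
import Mathlib

section
/- Let A be the complex algebra of 2×2 upper triangular matrices over ℂ. The linear map T : A → A defined by T([[a, b], [0, c]]) = [[a, −b], [0, c]] is anti-derivable at zero, i.e., whenever x, y ∈ A satisfy xy = 0, one has T(y)x + y T(x) = 0. -/
/-- Example: on the algebra of 2×2 upper triangular complex matrices, the map
`T [[a,b],[0,c]] = [[a,-b],[0,c]]` is anti-derivable at zero. -/
theorem stmt_1
    (T : Matrix (Fin 2) (Fin 2) ℂ → Matrix (Fin 2) (Fin 2) ℂ)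
    (hT : ∀ m : Matrix (Fin 2) (Fin 2) ℂ,
      T m = !![m 0 0, -(m 0 1); 0, m 1 1]) :
    ∀ x y : Matrix (Fin 2) (Fin 2) ℂ, x 1 0 = 0 → y 1 0 = 0 →
      x * y = 0 → T y * x + y * T x = 0 := by
  intro x y hx hy hxy
  have h00 := congrFun (congrFun hxy 0) 0
  have h11 := congrFun (congrFun hxy 1) 1
  simp [Matrix.mul_apply, Fin.sum_univ_two, hx, hy] at h00 h11
  rw [hT x, hT y]
  ext i j
  fin_cases i <;> fin_cases j <;>
    rcases h00 with h|h <;> rcases h11 with h'|h' <;>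
      simp [Matrix.mul_apply, Matrix.vecMul, dotProduct,
        Fin.sum_univ_two, hx, hy, h, h'] <;> ring
end

section
/- Let A be the complex algebra of 2×2 upper triangular matrices over ℂ, let T : A → A be defined by T([[a, b], [0, c]]) = [[a, −b], [0, c]], and let d : A → A be defined by d([[a, b], [0, c]]) = [[0, −2b], [0, 0]]. Then: (1) d is a derivation on A; (2) d is not an anti-derivation on A; (3) T(x) = d(x) + x for all x ∈ A; and (4) whenever x, y ∈ A satisfy xy = 0, one has d(y)x + y d(x) = −2 yx. -/
/-- On the algebra of 2×2 upper triangular complex matrices, with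
`T [[a,b],[0,c]] = [[a,-b],[0,c]]` and `d [[a,b],[0,c]] = [[0,-2b],[0,0]]`:
(1) `d` is a derivation; (2) `d` is not an anti-derivation;
(3) `T x = d x + x`; (4) if `x * y = 0` then `d y * x + y * d x = -2 (y * x)`. -/
theorem stmt_2
    (T d : Matrix (Fin 2) (Fin 2) ℂ → Matrix (Fin 2) (Fin 2) ℂ)
    (hT : ∀ m : Matrix (Fin 2) (Fin 2) ℂ,
      T m = !![m 0 0, -(m 0 1); 0, m 1 1])
    (hd : ∀ m : Matrix (Fin 2) (Fin 2) ℂ,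
      d m = !![0, -2 * m 0 1; 0, 0]) :
    (∀ x y : Matrix (Fin 2) (Fin 2) ℂ, x 1 0 = 0 → y 1 0 = 0 →
      d (x * y) = d x * y + x * d y) ∧
    (¬ (∀ x y : Matrix (Fin 2) (Fin 2) ℂ, x 1 0 = 0 → y 1 0 = 0 →
      d (x * y) = d y * x + y * d x)) ∧
    (∀ x : Matrix (Fin 2) (Fin 2) ℂ, x 1 0 = 0 → T x = d x + x) ∧
    (∀ x y : Matrix (Fin 2) (Fin 2) ℂ, x 1 0 = 0 → y 1 0 = 0 → x * y = 0 →
      d y * x + y * d x = (-2 : ℂ) • (y * x)) := by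
  refine ⟨?_, ?_, ?_, ?_⟩
  · intro x y hx hy
    rw [hd, hd, hd]
    ext i j
    fin_cases i <;> fin_cases j <;>
      simp [Matrix.mul_apply, Matrix.vecMul, dotProduct,
        Fin.sum_univ_two, hx, hy] <;> ring
  · intro h
    have := h !![1,0;0,0] !![0,1;0,0] (by norm_num) (by norm_num)
    rw [hd, hd, hd] at this
    have h01 := congrFun (congrFun this 0) 1
    simp [Matrix.mul_apply, Fin.sum_univ_two] at h01
  · intro x hx
    rw [hT, hd]
    ext i j
    fin_cases i <;> fin_cases j <;> simp [hx] <;> ring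
  · intro x y hx hy hxy
    have ha : x 0 0 * y 0 0 = 0 := by
      have := congrFun (congrFun hxy 0) 0
      simpa [Matrix.mul_apply, Fin.sum_univ_two, hy] using this
    have hb : x 1 1 * y 1 1 = 0 := by
      have := congrFun (congrFun hxy 1) 1
      simpa [Matrix.mul_apply, Fin.sum_univ_two, hx] using this
    rw [hd, hd]
    ext i j
    fin_cases i <;> fin_cases j <;>
      simp [Matrix.mul_apply, Matrix.vecMul, dotProduct,
        Fin.sum_univ_two, hx, hy] <;>
      first
      | ring1
      | linear_combination (-2 : ℂ) * ha
      | linear_combination (-2 : ℂ) * hb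
      | linear_combination (2 : ℂ) * ha
      | linear_combination (2 : ℂ) * hb
      | exact Or.symm (mul_eq_zero.mp ha)
      | exact Or.symm (mul_eq_zero.mp hb)
end

section
/- Let A be the complex algebra of 2×2 upper triangular matrices over ℂ and let T : A → A be defined by T([[a, b], [0, c]]) = [[a, −b], [0, c]]. Then for every α ∈ ℂ, the linear map x ↦ T(x) − αx is not an anti-derivation on A; equivalently, there exist no anti-derivation d̃ : A → A and scalar α ∈ ℂ such that T(x) = d̃(x) + αx for all x ∈ A. -/
/-- On the algebra of 2×2 upper triangular complex matrices, with
`T [[a,b],[0,c]] = [[a,-b],[0,c]]`, for no scalar `α ∈ ℂ` is the map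
`x ↦ T x - α • x` an anti-derivation on the upper triangular matrices. -/
theorem stmt_3
    (T : Matrix (Fin 2) (Fin 2) ℂ → Matrix (Fin 2) (Fin 2) ℂ)
    (hT : ∀ m : Matrix (Fin 2) (Fin 2) ℂ,
      T m = !![m 0 0, -(m 0 1); 0, m 1 1]) :
    ∀ α : ℂ, ¬ (∀ x y : Matrix (Fin 2) (Fin 2) ℂ, x 1 0 = 0 → y 1 0 = 0 →
      T (x * y) - α • (x * y) =
        (T y - α • y) * x + y * (T x - α • x)) := by
  intro α h
  have h1 := h 1 1 (by simp) (by simp)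
  have h2 := h !![0,1;0,0] !![1,0;0,0] (by simp) (by simp)
  have e1 := congrFun (congrFun h1 0) 0
  have e2 := congrFun (congrFun h2 0) 1
  simp [hT, Matrix.mul_apply, Fin.sum_univ_two, Matrix.one_apply,
    Matrix.sub_apply, Matrix.add_apply, Matrix.smul_apply] at e1 e2
  -- e1 : 1 - α = 2*(1-α) roughly; e2 : 0 = -2α roughly
  have : α = 1 := by linear_combination -e1
  rw [this] at e2
  norm_num at e2
end

section
/- Let A be a unital associative complex algebra with unit 1, let X be a unital A-bimodule, and suppose A satisfies property 𝔹 relative to X. Then for every linear map T : A → X the following statements are equivalent: (i) T is anti-derivable at zero; (ii) T(1)·a = a·T(1) for all a ∈ A, and there exists a Jordan derivation d : A → X such that T(a) = d(a) + T(1)·a for all a ∈ A and d(b)·a + b·d(a) = −2 T(1)·(ba) for all a, b ∈ A with ab = 0. -/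
/-- Let `A` be a unital associative complex algebra, `X` a unital `A`-bimodule
(with left action `l` and right action `r`), and suppose `A` satisfies property 𝔹
relative to `X`.  A linear map `T : A → X` is anti-derivable at zero iff `T 1`
commutes with `A` and there is a Jordan derivation `d : A → X` with
`T a = d a + T 1 · a` and `d b · a + b · d a = -2 T 1 · (b a)` whenever `a b = 0`. -/
theorem stmt_4 {A X : Type*} [Ring A] [Algebra ℂ A]
    [AddCommGroup X] [Module ℂ X]
    (l : A →ₗ[ℂ] X →ₗ[ℂ] X) (r : X →ₗ[ℂ] A →ₗ[ℂ] X)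
    (hl : ∀ (a b : A) (x : X), l (a * b) x = l a (l b x))
    (hr : ∀ (x : X) (a b : A), r (r x a) b = r x (a * b))
    (hlr : ∀ (a : A) (x : X) (b : A), l a (r x b) = r (l a x) b)
    (hlone : ∀ x : X, l 1 x = x) (hrone : ∀ x : X, r x 1 = x)
    (hB : ∀ φ : A →ₗ[ℂ] A →ₗ[ℂ] X, (∀ a b : A, a * b = 0 → φ a b = 0) →
      ∀ a b c : A, φ (a * b) c = φ a (b * c))
    (T : A →ₗ[ℂ] X) :
    (∀ a b : A, a * b = 0 → r (T b) a + l b (T a) = 0) ↔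
      ((∀ a : A, r (T 1) a = l a (T 1)) ∧
        ∃ d : A →ₗ[ℂ] X,
          (∀ a : A, d (a * a) = r (d a) a + l a (d a)) ∧
          (∀ a : A, T a = d a + r (T 1) a) ∧
          (∀ a b : A, a * b = 0 →
            r (d b) a + l b (d a) = -((2 : ℂ) • r (T 1) (b * a)))) := by
  constructor
  · intro h
    set φ : A →ₗ[ℂ] A →ₗ[ℂ] X := LinearMap.mk₂ ℂ (fun a b => r (T b) a + l b (T a))
      (fun a a' b => by simp; abel)
      (fun c a b => by simp [smul_add])
      (fun a b b' => by simp; abel)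
      (fun c a b => by simp [smul_add]) with hφ
    have hφ0 : ∀ a b : A, a * b = 0 → φ a b = 0 := fun a b hab => h a b hab
    have key := hB φ hφ0
    have hφap : ∀ a b : A, φ a b = r (T b) a + l b (T a) := fun a b => rfl
    -- commutativity of T 1
    have comm : ∀ a : A, r (T 1) a = l a (T 1) := by
      intro a
      have := key 1 a 1
      rw [one_mul, mul_one] at this
      rw [hφap, hφap, hlone, hrone] at this
      linear_combination (norm := abel) this
    -- the key product formula
    have star : ∀ a b : A, T (a * b) = r (T b) a + l b (T a) - r (T 1) (a * b) := by
      intro a b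
      have := key a b 1
      rw [mul_one] at this
      rw [hφap, hφap, hlone] at this
      -- r (T 1) (a*b) + T (a*b) = r (T b) a + l b (T a)
      linear_combination (norm := abel) this
    refine ⟨comm, T - r (T 1), ?_, ?_, ?_⟩
    · intro a
      have hda : (T - r (T 1)) a = T a - r (T 1) a := rfl
      have hdaa : (T - r (T 1)) (a * a) = T (a * a) - r (T 1) (a * a) := rfl
      rw [hda, hdaa, star a a]
      simp only [map_sub, LinearMap.sub_apply]
      rw [hr (T 1) a a, hlr, ← comm a, hr (T 1) a a]
      abel
    · intro a
      show T a = (T a - r (T 1) a) + r (T 1) a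
      abel
    · intro a b hab
      have hda : (T - r (T 1)) a = T a - r (T 1) a := rfl
      have hdb : (T - r (T 1)) b = T b - r (T 1) b := rfl
      rw [hda, hdb]
      simp only [map_sub, LinearMap.sub_apply]
      rw [hr (T 1) b a, hlr, ← comm b, hr (T 1) b a]
      have h0 := h a b hab
      have h2 : ((2 : ℂ) • r (T 1) (b * a)) = r (T 1) (b * a) + r (T 1) (b * a) := two_smul ℂ _
      rw [h2]
      linear_combination (norm := abel) h0
  · rintro ⟨comm, d, hJ, hTd, hlast⟩ a b hab
    rw [hTd a, hTd b]
    simp only [map_add, LinearMap.add_apply]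
    rw [hr (T 1) b a, hlr, ← comm b, hr (T 1) b a]
    have h0 := hlast a b hab
    have h2 : ((2 : ℂ) • r (T 1) (b * a)) = r (T 1) (b * a) + r (T 1) (b * a) := two_smul ℂ _
    rw [h2] at h0
    linear_combination (norm := abel) h0
end

section
/- Let A be a unital associative complex algebra with unit 1, let X be a unital A-bimodule, suppose A satisfies property 𝔹 relative to X, and suppose in addition that every Jordan derivation from A into X is a derivation. Then for a linear map T : A → X the following are equivalent: (i) T is anti-derivable at zero; (ii) T(1)·a = a·T(1) for all a ∈ A, and there exists a derivation d : A → X such that T(a) = d(a) + T(1)·a for all a ∈ A and d([a, b]) = −2 T(1)·[a, b] for all a, b ∈ A. -/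
/-- Let `A` be a unital associative complex algebra, `X` a unital `A`-bimodule
(with left action `l` and right action `r`), suppose `A` satisfies property 𝔹
relative to `X`, and suppose every Jordan derivation from `A` into `X` is a
derivation.  A linear map `T : A → X` is anti-derivable at zero iff `T 1`
commutes with `A` and there is a derivation `d : A → X` with
`T a = d a + T 1 · a` and `d [a,b] = -2 T 1 · [a,b]` for all `a, b`. -/
theorem stmt_5 {A X : Type*} [Ring A] [Algebra ℂ A]
    [AddCommGroup X] [Module ℂ X]
    (l : A →ₗ[ℂ] X →ₗ[ℂ] X) (r : X →ₗ[ℂ] A →ₗ[ℂ] X)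
    (hl : ∀ (a b : A) (x : X), l (a * b) x = l a (l b x))
    (hr : ∀ (x : X) (a b : A), r (r x a) b = r x (a * b))
    (hlr : ∀ (a : A) (x : X) (b : A), l a (r x b) = r (l a x) b)
    (hlone : ∀ x : X, l 1 x = x) (hrone : ∀ x : X, r x 1 = x)
    (hB : ∀ φ : A →ₗ[ℂ] A →ₗ[ℂ] X, (∀ a b : A, a * b = 0 → φ a b = 0) →
      ∀ a b c : A, φ (a * b) c = φ a (b * c))
    (hJ : ∀ d : A →ₗ[ℂ] X, (∀ a : A, d (a * a) = r (d a) a + l a (d a)) →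
      ∀ a b : A, d (a * b) = r (d a) b + l a (d b))
    (T : A →ₗ[ℂ] X) :
    (∀ a b : A, a * b = 0 → r (T b) a + l b (T a) = 0) ↔
      ((∀ a : A, r (T 1) a = l a (T 1)) ∧
        ∃ d : A →ₗ[ℂ] X,
          (∀ a b : A, d (a * b) = r (d a) b + l a (d b)) ∧
          (∀ a : A, T a = d a + r (T 1) a) ∧
          (∀ a b : A, d (a * b - b * a) =
            -((2 : ℂ) • r (T 1) (a * b - b * a)))) := by
  constructor
  · intro hT
    have key : ∀ a b c : A, r (T c) (a * b) + l c (T (a * b)) =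
        r (T (b * c)) a + l (b * c) (T a) := by
      intro a b c
      exact hB (LinearMap.mk₂ ℂ (fun a b => r (T b) a + l b (T a))
        (by intro m₁ m₂ n; simp; abel)
        (by intro c m n; simp)
        (by intro m n₁ n₂; simp [map_add]; abel)
        (by intro c m n; simp [map_smul])) (fun a b h => hT a b h) a b c
    have hcomm : ∀ a : A, r (T 1) a = l a (T 1) := by
      intro a
      have h := key 1 a 1
      rw [one_mul, mul_one, hlone, hrone] at h
      rw [add_comm (r (T 1) a) (T a)] at h
      exact add_left_cancel h
    have h2 : ∀ a b : A, T (a * b) = r (T b) a + l b (T a) - r (T 1) (a * b) := by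
      intro a b
      have h := key a b 1
      rw [mul_one, hlone] at h
      rw [eq_sub_iff_add_eq, add_comm]
      exact h
    have hlr' : ∀ a b : A, l a (r (T 1) b) = r (T 1) (a * b) := by
      intro a b
      rw [hlr, ← hcomm, hr]
    set d : A →ₗ[ℂ] X := T - r (T 1) with hd_def
    have hda : ∀ a : A, d a = T a - r (T 1) a := fun a => rfl
    have hJd : ∀ a : A, d (a * a) = r (d a) a + l a (d a) := by
      intro a
      simp only [hda, map_sub, LinearMap.sub_apply, hr, hlr', h2 a a]
      abel
    have hder := hJ d hJd
    have hE : ∀ a b : A, T (a * b) = T (b * a) + r (T 1) (b * a) - r (T 1) (a * b) := by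
      intro a b
      have h := hder a b
      simp only [hda, map_sub, LinearMap.sub_apply, hr, hlr'] at h
      have h' : T (a * b) = r (T a) b + l a (T b) - r (T 1) (a * b) := by
        rw [sub_eq_iff_eq_add] at h
        rw [h]
        abel
      rw [h', h2 b a]
      abel
    refine ⟨hcomm, d, hder, ?_, ?_⟩
    · intro a
      rw [hda, sub_add_cancel]
    · intro a b
      rw [hda, map_sub, map_sub, hE a b, two_smul]
      abel
  · rintro ⟨hcomm, d, hder, hTd, hdlie⟩ a b hab
    have hlr' : ∀ a b : A, l a (r (T 1) b) = r (T 1) (a * b) := by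
      intro a b
      rw [hlr, ← hcomm, hr]
    have hba : d (b * a) = -((2 : ℂ) • r (T 1) (b * a)) := by
      have h := hdlie b a
      rw [hab, sub_zero] at h
      simpa using h
    have key : r (d b) a + l b (d a) = -((2 : ℂ) • r (T 1) (b * a)) := by
      rw [← hder b a, hba]
    rw [hTd a, hTd b]
    simp only [map_add, LinearMap.add_apply, hr, hlr']
    have expand : r (d b) a + r (T 1) (b * a) + (l b (d a) + r (T 1) (b * a)) =
        (r (d b) a + l b (d a)) + ((2 : ℂ) • r (T 1) (b * a)) := by
      rw [two_smul]; abel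
    rw [expand, key]
    abel
end

section
/- Let A be an associative algebra, X an A-bimodule, and let ξ ∈ X satisfy ξ·a = a·ξ for all a ∈ A. Suppose d : A → X is a derivation satisfying d([a, b]) = −2 ξ·[a, b] for all a, b ∈ A. Then the linear map T : A → X defined by T(a) = d(a) + ξ·a is anti-derivable at zero. -/
/-- Let `A` be an associative (complex) algebra, `X` an `A`-bimodule (with left
action `l` and right action `r`), and `ξ ∈ X` with `ξ · a = a · ξ` for all `a`.
If `d : A → X` is a derivation with `d [a,b] = -2 ξ · [a,b]` for all `a, b`,
then `T a = d a + ξ · a` is anti-derivable at zero. -/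
theorem stmt_7 {A X : Type*} [NonUnitalRing A] [Module ℂ A]
    [SMulCommClass ℂ A A] [IsScalarTower ℂ A A]
    [AddCommGroup X] [Module ℂ X]
    (l : A →ₗ[ℂ] X →ₗ[ℂ] X) (r : X →ₗ[ℂ] A →ₗ[ℂ] X)
    (hl : ∀ (a b : A) (x : X), l (a * b) x = l a (l b x))
    (hr : ∀ (x : X) (a b : A), r (r x a) b = r x (a * b))
    (hlr : ∀ (a : A) (x : X) (b : A), l a (r x b) = r (l a x) b)
    (ξ : X) (hξ : ∀ a : A, r ξ a = l a ξ)
    (d : A →ₗ[ℂ] X)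
    (hder : ∀ a b : A, d (a * b) = r (d a) b + l a (d b))
    (hcomm : ∀ a b : A, d (a * b - b * a) =
      -((2 : ℂ) • r ξ (a * b - b * a)))
    (T : A →ₗ[ℂ] X) (hT : ∀ a : A, T a = d a + r ξ a) :
    ∀ a b : A, a * b = 0 → r (T b) a + l b (T a) = 0 := by
  intro a b hab
  have h1 : d (b * a) = -((2 : ℂ) • r ξ (b * a)) := by
    have h := hcomm a b
    rw [hab, zero_sub, map_neg, map_neg, smul_neg, neg_neg] at h
    exact neg_eq_iff_eq_neg.mp h
  have h2 : l b (r ξ a) = r ξ (b * a) := by rw [hξ, ← hl, ← hξ]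
  have h3 : r (r ξ b) a = r ξ (b * a) := hr ξ b a
  have h5 : r (d b) a + l b (d a) = -((2 : ℂ) • r ξ (b * a)) := by
    rw [← hder]; exact h1
  rw [hT, hT, map_add, LinearMap.add_apply, map_add, h2, h3]
  have goal_eq : r (d b) a + r ξ (b * a) + (l b (d a) + r ξ (b * a)) =
      (r (d b) a + l b (d a)) + (2 : ℂ) • r ξ (b * a) := by module
  rw [goal_eq, h5]
  simp
end

section
/- Let A be a unital associative complex algebra with unit 1, let X be a unital A-bimodule, suppose A satisfies property 𝔹 relative to X, and suppose that every Jordan derivation from A into X is an inner derivation. Then a linear map T : A → X is anti-derivable at zero if, and only if, there exist u, v ∈ X such that (u − v)·a = a·(u − v) for all a ∈ A, T(a) = a·u − v·a for all a ∈ A, and (ba)·u − u·(ba) + 2 (u − v)·(ba) = 0 for all a, b ∈ A with ab = 0. -/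
/-- Let `A` be a unital associative complex algebra, `X` a unital `A`-bimodule
(with left action `l` and right action `r`), suppose `A` satisfies property 𝔹
relative to `X`, and suppose every Jordan derivation from `A` into `X` is an
inner derivation.  A linear map `T : A → X` is anti-derivable at zero iff there
are `u, v ∈ X` with `u - v` commuting with `A`, `T a = a · u - v · a`, and
`[b a, u] + 2 (u - v) · (b a) = 0` whenever `a b = 0`. -/
theorem stmt_10 {A X : Type*} [Ring A] [Algebra ℂ A]
    [AddCommGroup X] [Module ℂ X]
    (l : A →ₗ[ℂ] X →ₗ[ℂ] X) (r : X →ₗ[ℂ] A →ₗ[ℂ] X)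
    (hl : ∀ (a b : A) (x : X), l (a * b) x = l a (l b x))
    (hr : ∀ (x : X) (a b : A), r (r x a) b = r x (a * b))
    (hlr : ∀ (a : A) (x : X) (b : A), l a (r x b) = r (l a x) b)
    (hlone : ∀ x : X, l 1 x = x) (hrone : ∀ x : X, r x 1 = x)
    (hB : ∀ φ : A →ₗ[ℂ] A →ₗ[ℂ] X, (∀ a b : A, a * b = 0 → φ a b = 0) →
      ∀ a b c : A, φ (a * b) c = φ a (b * c))
    (hJinner : ∀ d : A →ₗ[ℂ] X,
      (∀ a : A, d (a * a) = r (d a) a + l a (d a)) →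
      ∃ x₀ : X, ∀ a : A, d a = l a x₀ - r x₀ a)
    (T : A →ₗ[ℂ] X) :
    (∀ a b : A, a * b = 0 → r (T b) a + l b (T a) = 0) ↔
      ∃ u v : X,
        (∀ a : A, r (u - v) a = l a (u - v)) ∧
        (∀ a : A, T a = l a u - r v a) ∧
        (∀ a b : A, a * b = 0 →
          l (b * a) u - r u (b * a) + (2 : ℂ) • r (u - v) (b * a) = 0) := by
  -- Key computational identity, used in both directions.
  have main : ∀ (ξ v : X), (∀ c : A, r ξ c = l c ξ) → ∀ a b : A,
      r (l b (v + ξ) - r v b) a + l b (l a (v + ξ) - r v a)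
        = l (b * a) (v + ξ) - r (v + ξ) (b * a) + (2 : ℂ) • r ξ (b * a) := by
    intro ξ v hc a b
    rw [two_smul]
    have e1 : r (l b ξ) a = r ξ (b * a) := by rw [← hc, hr]
    have e2 : l b (l a ξ) = r ξ (b * a) := by rw [← hc, hlr, e1]
    simp only [map_add, map_sub, LinearMap.add_apply, LinearMap.sub_apply,
      e1, e2, hr, ← hl, hlr]
    rw [← hc]
    abel
  constructor
  · intro hT
    -- bilinear map φ
    set φ : A →ₗ[ℂ] A →ₗ[ℂ] X := LinearMap.mk₂ ℂ (fun a b => r (T b) a + l b (T a))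
      (by intro m₁ m₂ n; simp [map_add]; abel)
      (by intro c m n; simp [smul_add])
      (by intro m n₁ n₂; simp [map_add, LinearMap.add_apply]; abel)
      (by intro c m n; simp [smul_add]) with hφ
    have hφ0 : ∀ a b : A, a * b = 0 → φ a b = 0 := by
      intro a b hab
      simpa [hφ, LinearMap.mk₂_apply] using hT a b hab
    have key := hB φ hφ0
    simp only [hφ, LinearMap.mk₂_apply] at key
    set ξ := T 1 with hξ
    have central : ∀ a : A, r ξ a = l a ξ := by
      intro a
      have h := key 1 a 1
      simp only [one_mul, mul_one, hlone, hrone] at h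
      rw [add_comm (T a)] at h
      exact add_right_cancel h
    have keyT : ∀ b c : A, T (b * c) + l (b * c) ξ = r (T c) b + l c (T b) := by
      intro b c
      have h := key 1 b c
      simp only [one_mul, hlone, hrone] at h
      rw [← h]
    set d : A →ₗ[ℂ] X := T - (LinearMap.flip l) ξ with hd
    have hdapp : ∀ a : A, d a = T a - l a ξ := by
      intro a; simp [hd]
    have jordan : ∀ a : A, d (a * a) = r (d a) a + l a (d a) := by
      intro a
      have hT2 : T (a * a) = r (T a) a + l a (T a) - l (a * a) ξ := by
        have := keyT a a; rw [← this]; abel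
      have e3 : r (l a ξ) a = l (a * a) ξ := by
        rw [← hlr, central, ← hl]
      have e4 : l a (l a ξ) = l (a * a) ξ := by rw [← hl]
      rw [hdapp, hdapp, hT2]
      simp only [map_sub, LinearMap.sub_apply, e3, e4]
      abel
    obtain ⟨x₀, hx₀⟩ := hJinner d jordan
    have hTrep : ∀ a : A, T a = l a (x₀ + ξ) - r x₀ a := by
      intro a
      have h := hx₀ a
      rw [hdapp] at h
      rw [map_add]
      have : T a = l a x₀ - r x₀ a + l a ξ := by rw [← h]; abel
      rw [this]; abel
    refine ⟨x₀ + ξ, x₀, ?_, hTrep, ?_⟩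
    · intro a
      rw [add_sub_cancel_left]
      exact central a
    · intro a b hab
      have H := hT a b hab
      rw [hTrep a, hTrep b] at H
      have := main ξ x₀ central a b
      rw [add_sub_cancel_left, ← this]
      exact H
  · rintro ⟨u, v, hc, hrep, h3⟩ a b hab
    have huv : v + (u - v) = u := by abel
    have hc' : ∀ c : A, r (u - v) c = l c (u - v) := hc
    have := main (u - v) v hc' a b
    rw [huv] at this
    rw [← hrep b, ← hrep a] at this
    rw [this]
    exact h3 a b hab
end

section
/- Let A be an associative algebra and X an A-bimodule. Suppose u, v ∈ X satisfy (u − v)·a = a·(u − v) for all a ∈ A, and (ba)·u − u·(ba) + 2 (u − v)·(ba) = 0 for all a, b ∈ A with ab = 0. Then the linear map T : A → X defined by T(a) = a·u − v·a is anti-derivable at zero. -/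
/-- Let `A` be an associative (complex) algebra, `X` an `A`-bimodule (with left
action `l` and right action `r`), and `u, v ∈ X` with `u - v` commuting with `A`
and `[b a, u] + 2 (u - v) · (b a) = 0` whenever `a b = 0`.  Then
`T a = a · u - v · a` is anti-derivable at zero. -/
theorem stmt_11 {A X : Type*} [NonUnitalRing A] [Module ℂ A]
    [SMulCommClass ℂ A A] [IsScalarTower ℂ A A]
    [AddCommGroup X] [Module ℂ X]
    (l : A →ₗ[ℂ] X →ₗ[ℂ] X) (r : X →ₗ[ℂ] A →ₗ[ℂ] X)
    (hl : ∀ (a b : A) (x : X), l (a * b) x = l a (l b x))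
    (hr : ∀ (x : X) (a b : A), r (r x a) b = r x (a * b))
    (hlr : ∀ (a : A) (x : X) (b : A), l a (r x b) = r (l a x) b)
    (u v : X)
    (huv : ∀ a : A, r (u - v) a = l a (u - v))
    (hzero : ∀ a b : A, a * b = 0 →
      l (b * a) u - r u (b * a) + (2 : ℂ) • r (u - v) (b * a) = 0)
    (T : A →ₗ[ℂ] X) (hT : ∀ a : A, T a = l a u - r v a) :
    ∀ a b : A, a * b = 0 → r (T b) a + l b (T a) = 0 := by
  intro a b hab
  have key := hzero a b hab
  have e1 : r (l b (u - v)) a = r (u - v) (b * a) := by rw [← huv b, hr]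
  have h : r (l b u) a - r (l b v) a = r u (b * a) - r v (b * a) := by
    have h0 := e1
    simp only [map_sub, LinearMap.sub_apply] at h0 ⊢
    exact h0
  simp only [map_sub, LinearMap.sub_apply] at key h ⊢
  have h2 : r (l b u) a = (r u (b * a) - r v (b * a)) + r (l b v) a :=
    eq_add_of_sub_eq h
  calc r (T b) a + l b (T a)
      = l (b * a) u - r u (b * a)
        + (2 : ℂ) • (r u (b * a) - r v (b * a)) := by
        rw [hT, hT]
        simp only [map_sub, LinearMap.sub_apply, ← hl, hr, hlr]
        rw [h2]
        module
    _ = 0 := key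
end

section
/- Let A be a unital associative complex algebra with unit 1 such that A coincides with the linear span of its commutators {[a, b] : a, b ∈ A}, let X be a unital A-bimodule, suppose A satisfies property 𝔹 relative to X, and suppose every Jordan derivation from A into X is a derivation. Then every linear map T : A → X which is anti-derivable at zero is identically zero. -/
/-- Let `A` be a unital associative complex algebra which coincides with the
linear span of its commutators, `X` a unital `A`-bimodule (with left action `l`
and right action `r`), suppose `A` satisfies property 𝔹 relative to `X`, and
suppose every Jordan derivation from `A` into `X` is a derivation.  Then every
linear map `T : A → X` which is anti-derivable at zero is identically zero. -/
theorem stmt_12 {A X : Type*} [Ring A] [Algebra ℂ A]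
    [AddCommGroup X] [Module ℂ X]
    (hspan : Submodule.span ℂ {x : A | ∃ a b : A, x = a * b - b * a} = ⊤)
    (l : A →ₗ[ℂ] X →ₗ[ℂ] X) (r : X →ₗ[ℂ] A →ₗ[ℂ] X)
    (hl : ∀ (a b : A) (x : X), l (a * b) x = l a (l b x))
    (hr : ∀ (x : X) (a b : A), r (r x a) b = r x (a * b))
    (hlr : ∀ (a : A) (x : X) (b : A), l a (r x b) = r (l a x) b)
    (hlone : ∀ x : X, l 1 x = x) (hrone : ∀ x : X, r x 1 = x)
    (hB : ∀ φ : A →ₗ[ℂ] A →ₗ[ℂ] X, (∀ a b : A, a * b = 0 → φ a b = 0) →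
      ∀ a b c : A, φ (a * b) c = φ a (b * c))
    (hJ : ∀ d : A →ₗ[ℂ] X, (∀ a : A, d (a * a) = r (d a) a + l a (d a)) →
      ∀ a b : A, d (a * b) = r (d a) b + l a (d b))
    (T : A →ₗ[ℂ] X)
    (hT : ∀ a b : A, a * b = 0 → r (T b) a + l b (T a) = 0) :
    ∀ a : A, T a = 0 := by
  -- the bilinear map φ a b = T(b)·a + b·T(a)
  set φ : A →ₗ[ℂ] A →ₗ[ℂ] X := LinearMap.mk₂ ℂ (fun a b => r (T b) a + l b (T a))
    (fun m m' b => by simp; abel)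
    (fun c m b => by simp [smul_add])
    (fun a n n' => by simp; abel)
    (fun c a n => by simp [smul_add]) with hφ
  have hφapp : ∀ a b : A, φ a b = r (T b) a + l b (T a) := fun a b => rfl
  have hBφ := hB φ (fun a b h => hT a b h)
  -- key identity from property B with a = 1
  have E1 : ∀ b c : A, T (b * c) = r (T c) b + l c (T b) - l (b * c) (T 1) := by
    intro b c
    have h := hBφ 1 b c
    rw [one_mul, hφapp, hφapp, hrone] at h
    calc T (b * c) = (T (b * c) + l (b * c) (T 1)) - l (b * c) (T 1) := by abel
    _ = (r (T c) b + l c (T b)) - l (b * c) (T 1) := by rw [← h]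
    _ = r (T c) b + l c (T b) - l (b * c) (T 1) := by abel
  -- T 1 commutes with A
  have comm : ∀ b : A, r (T 1) b = l b (T 1) := by
    intro b
    have h := E1 b 1
    rw [mul_one, hlone] at h
    have h2 : r (T 1) b - l b (T 1) = 0 := by
      calc r (T 1) b - l b (T 1)
          = (r (T 1) b + T b - l b (T 1)) - T b := by abel
        _ = T b - T b := by rw [← h]
        _ = 0 := sub_self _
    exact sub_eq_zero.mp h2
  -- the map d a = T a - a·T(1) is a Jordan derivation
  set d : A →ₗ[ℂ] X := T - (LinearMap.flip l) (T 1) with hd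
  have hdapp : ∀ a : A, d a = T a - l a (T 1) := fun a => rfl
  have hjordan : ∀ a : A, d (a * a) = r (d a) a + l a (d a) := by
    intro a
    simp only [hdapp, map_sub, LinearMap.sub_apply]
    rw [E1 a a, ← hlr a (T 1) a, comm a, ← hl a a (T 1)]
    abel
  have hder := hJ d hjordan
  -- derivation identity for T
  have E3 : ∀ a b : A, T (a * b) = r (T a) b + l a (T b) - l (a * b) (T 1) := by
    intro a b
    have h := hder a b
    simp only [hdapp, map_sub, LinearMap.sub_apply] at h
    rw [← hlr a (T 1) b, comm b, ← hl a b (T 1)] at h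
    calc T (a * b) = (T (a * b) - l (a * b) (T 1)) + l (a * b) (T 1) := by abel
    _ = (r (T a) b - l (a * b) (T 1) + (l a (T b) - l (a * b) (T 1))) + l (a * b) (T 1) := by
        rw [← h]
    _ = r (T a) b + l a (T b) - l (a * b) (T 1) := by abel
  -- symmetry identity
  have sym : ∀ a b : A, r (T a) b + l a (T b) = r (T b) a + l b (T a) := by
    intro a b
    have h1 := E1 a b
    have h3 := E3 a b
    calc r (T a) b + l a (T b)
        = (r (T a) b + l a (T b) - l (a * b) (T 1)) + l (a * b) (T 1) := by abel
      _ = T (a * b) + l (a * b) (T 1) := by rw [← h3]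
      _ = (r (T b) a + l b (T a) - l (a * b) (T 1)) + l (a * b) (T 1) := by rw [h1]
      _ = r (T b) a + l b (T a) := by abel
  -- S = T + a ↦ a·T(1) vanishes on commutators, hence everywhere
  set S : A →ₗ[ℂ] X := T + (LinearMap.flip l) (T 1) with hS
  have hSapp : ∀ a : A, S a = T a + l a (T 1) := fun a => rfl
  have hScomm : ∀ x : A, (∃ a b : A, x = a * b - b * a) → S x = 0 := by
    rintro x ⟨a, b, rfl⟩
    rw [hSapp, map_sub, map_sub, E3 a b, E3 b a]
    have h := sym a b
    calc r (T a) b + l a (T b) - l (a * b) (T 1) - (r (T b) a + l b (T a) - l (b * a) (T 1))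
          + (l (a * b) (T 1) - l (b * a) (T 1))
        = (r (T a) b + l a (T b)) - (r (T b) a + l b (T a)) := by abel
      _ = (r (T b) a + l b (T a)) - (r (T b) a + l b (T a)) := by rw [h]
      _ = 0 := sub_self _
  have hSall : ∀ x : A, S x = 0 := by
    intro x
    have hle : Submodule.span ℂ {x : A | ∃ a b : A, x = a * b - b * a} ≤ LinearMap.ker S :=
      Submodule.span_le.mpr (fun y hy => hScomm y hy)
    rw [hspan] at hle
    exact hle (Submodule.mem_top)
  -- T 1 = 0
  have hT1 : T 1 = 0 := by
    have h := hSall 1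
    rw [hSapp, hlone] at h
    have h2 : (2 : ℂ) • T 1 = 0 := by rw [two_smul]; exact h
    simpa using (smul_eq_zero.mp h2).resolve_left (by norm_num)
  intro a
  have h := hSall a
  rw [hSapp, hT1, map_zero, add_zero] at h
  exact h
end

section
/- Let A be a unital associative complex algebra with unit 1, let X be a unital A-bimodule, and suppose A satisfies property 𝔹 relative to X. If a linear map T : A → X is anti-derivable at zero, then T(1)·a = a·T(1) for all a ∈ A, and T(ab) = T(b)·a + b·T(a) − T(1)·(ab) for all a, b ∈ A. -/
/-- Let `A` be a unital associative complex algebra, `X` a unital `A`-bimodule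
(with left action `l` and right action `r`), and suppose `A` satisfies property
𝔹 relative to `X`.  If a linear map `T : A → X` is anti-derivable at zero, then
`T 1` commutes with `A` and `T (a b) = T b · a + b · T a - T 1 · (a b)`. -/
theorem stmt_13 {A X : Type*} [Ring A] [Algebra ℂ A]
    [AddCommGroup X] [Module ℂ X]
    (l : A →ₗ[ℂ] X →ₗ[ℂ] X) (r : X →ₗ[ℂ] A →ₗ[ℂ] X)
    (hl : ∀ (a b : A) (x : X), l (a * b) x = l a (l b x))
    (hr : ∀ (x : X) (a b : A), r (r x a) b = r x (a * b))
    (hlr : ∀ (a : A) (x : X) (b : A), l a (r x b) = r (l a x) b)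
    (hlone : ∀ x : X, l 1 x = x) (hrone : ∀ x : X, r x 1 = x)
    (hB : ∀ φ : A →ₗ[ℂ] A →ₗ[ℂ] X, (∀ a b : A, a * b = 0 → φ a b = 0) →
      ∀ a b c : A, φ (a * b) c = φ a (b * c))
    (T : A →ₗ[ℂ] X)
    (hT : ∀ a b : A, a * b = 0 → r (T b) a + l b (T a) = 0) :
    (∀ a : A, r (T 1) a = l a (T 1)) ∧
      (∀ a b : A, T (a * b) = r (T b) a + l b (T a) - r (T 1) (a * b)) := by
  set φ : A →ₗ[ℂ] A →ₗ[ℂ] X := LinearMap.mk₂ ℂ (fun a b => r (T b) a + l b (T a))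
    (fun a a' b => by simp [map_add]; abel)
    (fun c a b => by simp [map_smul, smul_add])
    (fun a b b' => by simp [map_add]; abel)
    (fun c a b => by simp [map_smul, smul_add]) with hφ
  have hφ0 : ∀ a b : A, a * b = 0 → φ a b = 0 := by
    intro a b h
    simpa [hφ] using hT a b h
  have key := hB φ hφ0
  have h2 : ∀ a b : A, T (a * b) = r (T b) a + l b (T a) - r (T 1) (a * b) := by
    intro a b
    have := key a b 1
    simp only [hφ, LinearMap.mk₂_apply, mul_one] at this
    rw [hlone] at this
    rw [eq_sub_iff_add_eq, add_comm]; exact this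
  refine ⟨fun a => ?_, h2⟩
  have := key 1 a 1
  simp only [hφ, LinearMap.mk₂_apply, one_mul, mul_one] at this
  rw [hlone, hrone] at this
  linear_combination (norm := abel) this
end

section
/- Let A be a unital associative complex algebra with unit 1, let X be a unital A-bimodule, and suppose A satisfies property 𝔹 relative to X. If a linear map T : A → X is anti-derivable at zero, then the linear map d : A → X defined by d(a) = T(a) − T(1)·a is a Jordan derivation. -/
/-- Let `A` be a unital associative complex algebra, `X` a unital `A`-bimodule
(with left action `l` and right action `r`), and suppose `A` satisfies property
𝔹 relative to `X`.  If a linear map `T : A → X` is anti-derivable at zero, then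
the map `d : a ↦ T a - T 1 · a` is a Jordan derivation. -/
theorem stmt_14 {A X : Type*} [Ring A] [Algebra ℂ A]
    [AddCommGroup X] [Module ℂ X]
    (l : A →ₗ[ℂ] X →ₗ[ℂ] X) (r : X →ₗ[ℂ] A →ₗ[ℂ] X)
    (hl : ∀ (a b : A) (x : X), l (a * b) x = l a (l b x))
    (hr : ∀ (x : X) (a b : A), r (r x a) b = r x (a * b))
    (hlr : ∀ (a : A) (x : X) (b : A), l a (r x b) = r (l a x) b)
    (hlone : ∀ x : X, l 1 x = x) (hrone : ∀ x : X, r x 1 = x)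
    (hB : ∀ φ : A →ₗ[ℂ] A →ₗ[ℂ] X, (∀ a b : A, a * b = 0 → φ a b = 0) →
      ∀ a b c : A, φ (a * b) c = φ a (b * c))
    (T : A →ₗ[ℂ] X)
    (hT : ∀ a b : A, a * b = 0 → r (T b) a + l b (T a) = 0) :
    ∀ a : A, T (a * a) - r (T 1) (a * a) =
      r (T a - r (T 1) a) a + l a (T a - r (T 1) a) := by
  intro a
  set φ : A →ₗ[ℂ] A →ₗ[ℂ] X := LinearMap.mk₂ ℂ (fun a b => r (T b) a + l b (T a))
    (fun m m' n => by simp [add_add_add_comm])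
    (fun c m n => by simp)
    (fun m n n' => by simp [add_add_add_comm])
    (fun c m n => by simp) with hφdef
  have key := hB φ (fun a b h => by simpa [hφdef] using hT a b h)
  -- centrality of T 1
  have hcen : l a (T 1) = r (T 1) a := by
    have e1 := key 1 a 1
    simp only [hφdef, LinearMap.mk₂_apply, one_mul, mul_one, hlone, hrone] at e1
    -- e1 : r (T 1) a + T a = T a + l a (T 1)
    rw [add_comm (T a)] at e1
    exact (add_right_cancel e1).symm
  have e2 := key a a 1
  simp only [hφdef, LinearMap.mk₂_apply, mul_one, hlone] at e2
  -- e2 : r (T 1) (a * a) + T (a * a) = r (T a) a + l a (T a)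
  have h3 : r (r (T 1) a) a = r (T 1) (a * a) := hr _ _ _
  have h4 : l a (r (T 1) a) = r (T 1) (a * a) := by
    rw [hlr, hcen, hr]
  rw [map_sub, map_sub, LinearMap.sub_apply, h3, h4]
  -- goal now linear algebra
  linear_combination (norm := abel) e2
end

section
/- Let A be a unital associative complex algebra with unit 1, let X be a unital A-bimodule, suppose A satisfies property 𝔹 relative to X, and suppose every Jordan derivation from A into X is a derivation. If a linear map T : A → X is anti-derivable at zero, then T is a generalized derivation, namely T(ab) = T(a)·b + a·T(b) − a·T(1)·b for all a, b ∈ A, and moreover T([a, b]) = −T(1)·[a, b] for all a, b ∈ A. -/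
/-- Let `A` be a unital associative complex algebra, `X` a unital `A`-bimodule
(with left action `l` and right action `r`), suppose `A` satisfies property 𝔹
relative to `X`, and suppose every Jordan derivation from `A` into `X` is a
derivation.  If a linear map `T : A → X` is anti-derivable at zero, then `T` is
a generalized derivation, `T (a b) = T a · b + a · T b - a · T 1 · b`, and
moreover `T [a,b] = - T 1 · [a,b]` for all `a, b`. -/
theorem stmt_15 {A X : Type*} [Ring A] [Algebra ℂ A]
    [AddCommGroup X] [Module ℂ X]
    (l : A →ₗ[ℂ] X →ₗ[ℂ] X) (r : X →ₗ[ℂ] A →ₗ[ℂ] X)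
    (hl : ∀ (a b : A) (x : X), l (a * b) x = l a (l b x))
    (hr : ∀ (x : X) (a b : A), r (r x a) b = r x (a * b))
    (hlr : ∀ (a : A) (x : X) (b : A), l a (r x b) = r (l a x) b)
    (hlone : ∀ x : X, l 1 x = x) (hrone : ∀ x : X, r x 1 = x)
    (hB : ∀ φ : A →ₗ[ℂ] A →ₗ[ℂ] X, (∀ a b : A, a * b = 0 → φ a b = 0) →
      ∀ a b c : A, φ (a * b) c = φ a (b * c))
    (hJ : ∀ d : A →ₗ[ℂ] X, (∀ a : A, d (a * a) = r (d a) a + l a (d a)) →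
      ∀ a b : A, d (a * b) = r (d a) b + l a (d b))
    (T : A →ₗ[ℂ] X)
    (hT : ∀ a b : A, a * b = 0 → r (T b) a + l b (T a) = 0) :
    (∀ a b : A, T (a * b) = r (T a) b + l a (T b) - l a (r (T 1) b)) ∧
      (∀ a b : A, T (a * b - b * a) = -(r (T 1) (a * b - b * a))) := by
  set φ : A →ₗ[ℂ] A →ₗ[ℂ] X := LinearMap.mk₂ ℂ (fun a b => r (T b) a + l b (T a))
    (fun a a' b => by simp; abel)
    (fun c a b => by simp)
    (fun a b b' => by simp; abel)
    (fun c a b => by simp) with hφdef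
  have hφ0 : ∀ a b : A, a * b = 0 → φ a b = 0 := by
    intro a b h
    simpa [hφdef] using hT a b h
  have hφ : ∀ a b c : A, φ (a * b) c = φ a (b * c) := hB φ hφ0
  -- key2 : T(a*b) expressed via the "anti" relation
  have key2 : ∀ a b : A, T (a * b) = r (T b) a + l b (T a) - r (T 1) (a * b) := by
    intro a b
    have h := hφ a b 1
    simp only [hφdef, LinearMap.mk₂_apply, mul_one] at h
    rw [hlone] at h
    -- h : r (T 1) (a*b) + T (a*b) = r (T b) a + l b (T a)
    linear_combination (norm := abel) h
  -- comm : T 1 commutes with everything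
  have comm : ∀ a : A, l a (T 1) = r (T 1) a := by
    intro a
    have h := hφ 1 a 1
    simp only [hφdef, LinearMap.mk₂_apply, one_mul, mul_one] at h
    rw [hrone, hlone] at h
    -- h : r (T 1) a + T a = T a + l a (T 1)
    linear_combination (norm := abel) -h
  have lrcomm : ∀ a b : A, l a (r (T 1) b) = r (T 1) (a * b) := by
    intro a b
    rw [hlr, comm, hr]
  set d : A →ₗ[ℂ] X := T - r (T 1) with hddef
  have hdapp : ∀ a : A, d a = T a - r (T 1) a := fun a => rfl
  have hdJ : ∀ a : A, d (a * a) = r (d a) a + l a (d a) := by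
    intro a
    rw [hdapp, hdapp, key2 a a]
    rw [map_sub, LinearMap.sub_apply, map_sub, lrcomm, hr]
    abel
  have hder := hJ d hdJ
  have main : ∀ a b : A, T (a * b) = r (T a) b + l a (T b) - l a (r (T 1) b) := by
    intro a b
    have h := hder a b
    rw [hdapp, hdapp, hdapp] at h
    rw [map_sub, LinearMap.sub_apply, map_sub, hr] at h
    linear_combination (norm := abel) h
  refine ⟨main, fun a b => ?_⟩
  have h1 : T (a * b) = r (T a) b + l a (T b) - r (T 1) (a * b) := by
    rw [main a b, lrcomm]
  have h2 := key2 b a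
  rw [map_sub, map_sub, h1, h2]
  abel
end
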